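/- arXiv:1201.4631 — 5 statements merged into one kernel-verified Lean document; each statement's English description precedes it below -/
import Mathlib

section
/- Let V : (0,∞) → ℝ be continuous with V(u) → ∞ as u → 0⁺ and as u → ∞, such that u ↦ exp(-βV(u)) and u ↦ u·exp(-βV(u)) are integrable on (0,∞) for every β > 0, and such that V attains its global minimum at a unique point a > 0. Assume V is four times continuously differentiable in a neighborhood of a, with V''(a) = 2c₂ > 0 and V'''(a) = 6c₃ with c₃ < 0. Then for all sufficiently small T > 0 the mean spacing exceeds the ground-state spacing: m(T) > a (macroscopic thermal expansion). -/
/-!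
Put `f u = (u - a) e^{-βV(u)}`, so that `m(T) > a` says `∫₀^∞ f > 0` for `β = 1/T`. Reflecting
`(a - δ, a + δ)` about `a` turns its contribution into `∫₀^δ t (e^{-βV(a+t)} - e^{-βV(a-t)}) dt`.
Taylor expansion at the minimum gives `V(a+t) - V(a-t) = 2c₃t³ + o(t³)`, so for `c₃ < 0` this
integrand is nonnegative, and on a small interval `[t₁, t₂]` it is at least a fixed multiple of
`e^{-βM₁}` for a level `M₁` slightly above `V(a)`. The remaining negative part `(0, a - δ]` only
sees values `V ≥ M₂ > M₁` (continuity, a strict minimum, and `V → ∞` at `0⁺`), so it is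
`O(e^{-βM₂})`, and the right tail is nonnegative.
-/

open MeasureTheory Set Filter Topology Asymptotics Real
open scoped Nat

theorem ContDiffAt.isLittleO_sub_taylor {E : Type*} [NormedAddCommGroup E] [NormedSpace ℝ E]
    {f : ℝ → E} {x : ℝ} {n : ℕ} (hf : ContDiffAt ℝ n f x) :
    (fun t ↦ f (x + t) - ∑ k ∈ Finset.range (n + 1), ((k ! : ℝ)⁻¹ * t ^ k) • iteratedDeriv k f x)
      =o[𝓝 0] (· ^ n) := by
  obtain ⟨u, hu, hfu⟩ := hf.contDiffOn le_rfl (by simp)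
  obtain ⟨ε, hε, hball⟩ := Metric.mem_nhds_iff.1 hu
  have hT := taylor_isLittleO (convex_ball x ε) (Metric.mem_ball_self hε) (hfu.mono hball)
  rw [nhdsWithin_eq_nhds.2 (Metric.ball_mem_nhds x hε)] at hT
  have hx : Tendsto (x + ·) (𝓝 0) (𝓝 x) := by
    simpa using (continuous_const_add x).tendsto 0
  refine (hT.comp_tendsto hx).congr (fun t ↦ ?_) (fun t ↦ by simp)
  simp [taylor_within_apply,
    iteratedDerivWithin_of_isOpen Metric.isOpen_ball (Metric.mem_ball_self hε)]

theorem ContDiffAt.isLittleO_sub_reflect_sub_taylor {f : ℝ → ℝ} {x : ℝ}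
    (hf : ContDiffAt ℝ 3 f x) :
    (fun t ↦ f (x + t) - f (x - t) - (2 * deriv f x * t + iteratedDeriv 3 f x / 3 * t ^ 3))
      =o[𝓝 0] (· ^ 3) := by
  have hT := hf.isLittleO_sub_taylor
  have hT' : (fun t ↦ f (x - t) -
      ∑ k ∈ Finset.range 4, ((k ! : ℝ)⁻¹ * (-t) ^ k) • iteratedDeriv k f x) =o[𝓝 0] (· ^ 3) := by
    have h := hT.comp_tendsto (continuous_neg.tendsto' (0 : ℝ) 0 neg_zero)
    simp only [Function.comp_def, ← sub_eq_add_neg, Odd.neg_pow (by decide : Odd 3)] at h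
    exact isLittleO_neg_right.1 h
  refine (hT.sub hT').congr (fun t ↦ ?_) (fun t ↦ rfl)
  simp only [Finset.sum_range_succ, Finset.sum_range_zero, Nat.factorial, iteratedDeriv_zero,
    iteratedDeriv_one, smul_eq_mul]
  push_cast
  ring

theorem ContDiffAt.eventually_sub_reflect_le_of_deriv_eq_zero {f : ℝ → ℝ} {x : ℝ}
    (hf : ContDiffAt ℝ 3 f x) (hf' : deriv f x = 0) (hf''' : iteratedDeriv 3 f x < 0) :
    ∀ᶠ t in 𝓝[>] 0, f (x + t) - f (x - t) ≤ iteratedDeriv 3 f x / 6 * t ^ 3 := by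
  have h := hf.isLittleO_sub_reflect_sub_taylor.def (c := -iteratedDeriv 3 f x / 6) (by linarith)
  filter_upwards [nhdsWithin_le_nhds h, self_mem_nhdsWithin] with t ht (htpos : 0 < t)
  rw [hf', Real.norm_eq_abs, Real.norm_eq_abs, abs_of_pos (pow_pos htpos 3)] at ht
  linarith [(abs_le.1 ht).2]

theorem exists_pos_add_le_of_tendsto_nhdsGT {V : ℝ → ℝ} {m b : ℝ}
    (hcont : ContinuousOn V (Ioc 0 b)) (hV0 : Tendsto V (𝓝[>] 0) atTop)
    (hlt : ∀ u ∈ Ioc 0 b, m < V u) : ∃ η > 0, ∀ u ∈ Ioc 0 b, m + η ≤ V u := by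
  obtain ⟨ε, hε, hnear⟩ := mem_nhdsGT_iff_exists_Ioc_subset.1 (hV0.eventually_ge_atTop (m + 1))
  have hK : Icc ε b ⊆ Ioc 0 b := fun u hu ↦ ⟨lt_of_lt_of_le hε hu.1, hu.2⟩
  obtain ⟨m', hm', hfar⟩ :=
    isCompact_Icc.exists_forall_le' (hcont.mono hK) fun u hu ↦ hlt u (hK hu)
  refine ⟨min 1 (m' - m), lt_min one_pos (sub_pos.2 hm'), fun u hu ↦ ?_⟩
  rcases le_or_gt u ε with hu' | hu'
  · linarith [min_le_left 1 (m' - m), show m + 1 ≤ V u from hnear ⟨hu.1, hu'⟩]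
  · linarith [min_le_right 1 (m' - m), hfar u ⟨hu'.le, hu.2⟩]

namespace MeasureTheory.IntegrableOn

theorem intervalIntegrable_of_nonneg {E : Type*} [NormedAddCommGroup E] {f : ℝ → E} {b c : ℝ}
    (hf : IntegrableOn f (Ioi 0)) (hb : 0 ≤ b) (hc : 0 ≤ c) : IntervalIntegrable f volume b c :=
  intervalIntegrable_iff.2 (hf.mono_set fun _ hu ↦ lt_of_le_of_lt (le_min hb hc) hu.1)

theorem intervalIntegrable_comp_add_left {E : Type*} [NormedAddCommGroup E] {f : ℝ → E}
    {a δ : ℝ} (hf : IntegrableOn f (Ioi 0)) (ha : 0 ≤ a) (hδ : 0 ≤ δ) :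
    IntervalIntegrable (fun t ↦ f (a + t)) volume 0 δ := by
  simpa using (hf.intervalIntegrable_of_nonneg ha (by linarith : 0 ≤ a + δ)).comp_add_left a

theorem intervalIntegrable_comp_sub_left {E : Type*} [NormedAddCommGroup E] {f : ℝ → E}
    {a δ : ℝ} (hf : IntegrableOn f (Ioi 0)) (hδa : δ ≤ a) (hδ : 0 ≤ δ) :
    IntervalIntegrable (fun t ↦ f (a - t)) volume 0 δ := by
  have h := (hf.intervalIntegrable_of_nonneg (b := a) (c := a - δ) (by linarith)
    (by linarith)).comp_sub_left a
  rwa [sub_self, sub_sub_cancel] at h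

end MeasureTheory.IntegrableOn

theorem integral_Ioi_eq_add_integral_reflect {E : Type*} [NormedAddCommGroup E]
    [NormedSpace ℝ E] [CompleteSpace E] {f : ℝ → E} {a δ : ℝ} (hf : IntegrableOn f (Ioi 0))
    (hδ : 0 ≤ δ) (hδa : δ ≤ a) :
    ∫ u in Ioi 0, f u = (∫ u in 0..a - δ, f u) + (∫ t in 0..δ, (f (a + t) + f (a - t)))
      + ∫ u in Ioi (a + δ), f u := by
  have hI : ∀ b c, 0 ≤ b → 0 ≤ c → IntervalIntegrable f volume b c :=
    fun b c ↦ hf.intervalIntegrable_of_nonneg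
  rw [← intervalIntegral.integral_interval_add_Ioi' (hI 0 (a + δ) le_rfl (by linarith))
      (hf.mono_set (Ioi_subset_Ioi (by linarith))),
    ← intervalIntegral.integral_add_adjacent_intervals (b := a - δ) (hI _ _ le_rfl (by linarith))
      (hI _ _ (by linarith) (by linarith)),
    ← intervalIntegral.integral_add_adjacent_intervals (a := a - δ) (b := a) (c := a + δ)
      (hI _ _ (by linarith) (by linarith)) (hI _ _ (by linarith) (by linarith)),
    intervalIntegral.integral_add (hf.intervalIntegrable_comp_add_left (by linarith) hδ)
      (hf.intervalIntegrable_comp_sub_left hδa hδ),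
    intervalIntegral.integral_comp_add_left, intervalIntegral.integral_comp_sub_left]
  simp only [add_zero, sub_zero]
  abel

theorem intervalIntegral.mul_le_integral_of_le_on_subinterval {f : ℝ → ℝ} {b c t₁ t₂ m : ℝ}
    (hf : IntervalIntegrable f volume b c) (hb : b ≤ t₁) (ht : t₁ ≤ t₂) (hc : t₂ ≤ c)
    (hnonneg : ∀ t ∈ Ioc b c, 0 ≤ f t) (hm : ∀ t ∈ Icc t₁ t₂, m ≤ f t) :
    (t₂ - t₁) * m ≤ ∫ t in b..c, f t :=
  calc (t₂ - t₁) * m = ∫ _ in t₁..t₂, m := by simp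
    _ ≤ ∫ t in t₁..t₂, f t :=
      intervalIntegral.integral_mono_on ht intervalIntegrable_const
        (hf.mono_set (by
          rw [uIcc_of_le ht, uIcc_of_le (hb.trans (ht.trans hc))]; exact Icc_subset_Icc hb hc)) hm
    _ ≤ ∫ t in b..c, f t := intervalIntegral.integral_mono_interval hb ht hc
        ((ae_restrict_iff' measurableSet_Ioc).2 (.of_forall hnonneg)) hf

theorem exp_neg_mul_mul_one_sub_le_sub {β v w M d : ℝ} (hβ : 0 ≤ β) (hd : 0 ≤ d)
    (hvM : v ≤ M) (hvw : v + d ≤ w) :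
    exp (-β * M) * (1 - exp (-β * d)) ≤ exp (-β * v) - exp (-β * w) := by
  have hw : exp (-β * w) ≤ exp (-β * v) * exp (-β * d) := by
    rw [← exp_add]; exact exp_le_exp.2 (by nlinarith)
  have hM : exp (-β * M) ≤ exp (-β * v) := exp_le_exp.2 (by nlinarith)
  have hd' : 0 ≤ 1 - exp (-β * d) := sub_nonneg.2 (exp_le_one_iff.2 (by nlinarith))
  nlinarith [mul_le_mul_of_nonneg_right hM hd']

theorem neg_sq_mul_exp_le_integral_sub_mul_exp {V : ℝ → ℝ} {a b M β : ℝ} (hβ : 0 ≤ β)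
    (hb : 0 ≤ b) (hba : b ≤ a)
    (hint : IntervalIntegrable (fun u ↦ (u - a) * exp (-β * V u)) volume 0 b)
    (hV : ∀ u ∈ Ioo 0 b, M ≤ V u) :
    -(a ^ 2 * exp (-β * M)) ≤ ∫ u in 0..b, (u - a) * exp (-β * V u) :=
  calc -(a ^ 2 * exp (-β * M)) ≤ ∫ _ in 0..b, -(a * exp (-β * M)) := by
        simp only [intervalIntegral.integral_const, sub_zero, smul_eq_mul]
        nlinarith [mul_le_mul_of_nonneg_right hba (mul_nonneg (hb.trans hba) (exp_pos (-β * M)).le)]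
    _ ≤ ∫ u in 0..b, (u - a) * exp (-β * V u) := by
        refine intervalIntegral.integral_mono_on_of_le_Ioo hb intervalIntegrable_const hint
          fun u hu ↦ ?_
        have hE : exp (-β * V u) ≤ exp (-β * M) := exp_le_exp.2 (by nlinarith [hV u hu])
        nlinarith [exp_pos (-β * V u), hu.1, hu.2]

theorem eventually_integral_sub_mul_exp_pos_of_bump {V : ℝ → ℝ} {a δ t₁ t₂ M₁ M₂ d : ℝ}
    (hint : ∀ β > 0, IntegrableOn (fun u ↦ (u - a) * exp (-β * V u)) (Ioi 0))
    (hδa : δ ≤ a) (ht₁ : 0 < t₁) (ht₁₂ : t₁ < t₂) (ht₂ : t₂ ≤ δ) (hd : 0 < d) (hM : M₁ < M₂)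
    (hsym : ∀ t ∈ Ioc 0 δ, V (a + t) ≤ V (a - t))
    (hbump : ∀ t ∈ Icc t₁ t₂, V (a + t) ≤ M₁ ∧ V (a + t) + d ≤ V (a - t))
    (hgap : ∀ u ∈ Ioo 0 (a - δ), M₂ ≤ V u) :
    ∀ᶠ β in atTop, 0 < ∫ u in Ioi 0, (u - a) * exp (-β * V u) := by
  have hδ : 0 ≤ δ := by linarith
  have hexp : ∀ {k : ℝ}, 0 < k → Tendsto (fun β ↦ exp (-β * k)) atTop (𝓝 0) := fun hk ↦
    tendsto_exp_comp_nhds_zero.2 (tendsto_neg_atTop_atBot.atBot_mul_const hk)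
  -- the lower bound below, divided by `exp (-β * M₁)`
  have hlim : Tendsto (fun β ↦ t₁ * (t₂ - t₁) * (1 - exp (-β * d)) - a ^ 2 * exp (-β * (M₂ - M₁)))
      atTop (𝓝 (t₁ * (t₂ - t₁) * (1 - 0) - a ^ 2 * 0)) :=
    ((hexp hd).const_sub 1 |>.const_mul _).sub ((hexp (sub_pos.2 hM)).const_mul _)
  have hc : 0 < t₁ * (t₂ - t₁) * (1 - 0) - a ^ 2 * 0 := by
    simp only [sub_zero, mul_one, mul_zero]; nlinarith
  filter_upwards [hlim.eventually_const_lt hc, eventually_gt_atTop 0] with β hβ hβ0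
  set f : ℝ → ℝ := fun u ↦ (u - a) * exp (-β * V u)
  have hf : ∀ t, f (a + t) + f (a - t) = t * (exp (-β * V (a + t)) - exp (-β * V (a - t))) :=
    fun t ↦ by simp only [f]; ring
  have hnear : (t₂ - t₁) * (t₁ * (exp (-β * M₁) * (1 - exp (-β * d))))
      ≤ ∫ t in 0..δ, (f (a + t) + f (a - t)) := by
    refine intervalIntegral.mul_le_integral_of_le_on_subinterval
      (((hint β hβ0).intervalIntegrable_comp_add_left (by linarith) hδ).add
        ((hint β hβ0).intervalIntegrable_comp_sub_left hδa hδ))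
      ht₁.le ht₁₂.le ht₂ (fun t ht ↦ ?_) (fun t ht ↦ ?_) <;> rw [hf]
    · exact mul_nonneg ht.1.le (sub_nonneg.2 (exp_le_exp.2 (by nlinarith [hsym t ht])))
    · have hdecay : 0 ≤ 1 - exp (-β * d) := sub_nonneg.2 (exp_le_one_iff.2 (by nlinarith))
      exact mul_le_mul ht.1
        (exp_neg_mul_mul_one_sub_le_sub hβ0.le hd.le (hbump t ht).1 (hbump t ht).2)
        (mul_nonneg (exp_pos _).le hdecay) (ht₁.le.trans ht.1)
  have hfar := neg_sq_mul_exp_le_integral_sub_mul_exp hβ0.le (by linarith) (by linarith)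
    ((hint β hβ0).intervalIntegrable_of_nonneg le_rfl (by linarith)) hgap
  have htail : 0 ≤ ∫ u in Ioi (a + δ), f u :=
    setIntegral_nonneg measurableSet_Ioi fun u hu ↦
      mul_nonneg (by linarith [mem_Ioi.1 hu]) (exp_pos _).le
  have hsplit : exp (-β * M₂) = exp (-β * M₁) * exp (-β * (M₂ - M₁)) := by
    rw [← exp_add]; ring_nf
  rw [integral_Ioi_eq_add_integral_reflect (hint β hβ0) hδ hδa]
  rw [hsplit] at hfar
  linarith [mul_pos (exp_pos (-β * M₁)) hβ]

theorem eventually_integral_sub_mul_exp_pos_of_cubic {V : ℝ → ℝ} {a δ η c : ℝ}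
    (hint : ∀ β > 0, IntegrableOn (fun u ↦ (u - a) * exp (-β * V u)) (Ioi 0))
    (hVa : ContinuousAt V a) (hδ : 0 < δ) (hδa : δ ≤ a) (hη : 0 < η) (hc : c < 0)
    (hcubic : ∀ t ∈ Ioc 0 δ, V (a + t) - V (a - t) ≤ c * t ^ 3)
    (hgap : ∀ u ∈ Ioc 0 (a - δ), V a + η ≤ V u) :
    ∀ᶠ β in atTop, 0 < ∫ u in Ioi 0, (u - a) * exp (-β * V u) := by
  have hVa' : Tendsto (fun t ↦ V (a + t)) (𝓝[>] 0) (𝓝 (V a)) :=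
    hVa.tendsto.comp (((continuous_const_add a).tendsto' 0 a (add_zero a)).mono_left
      nhdsWithin_le_nhds)
  obtain ⟨r, hr : 0 < r, hrsub⟩ := mem_nhdsGT_iff_exists_Ioc_subset.1
    ((hVa'.eventually_lt_const (by linarith : V a < V a + η / 2)).and
      (eventually_nhdsWithin_of_eventually_nhds (eventually_le_nhds hδ)))
  have hsym : ∀ t ∈ Ioc 0 δ, V (a + t) ≤ V (a - t) := fun t ht ↦ by
    nlinarith [hcubic t ht, pow_pos ht.1 3]
  have hbump : ∀ t ∈ Icc (r / 2) r,
      V (a + t) ≤ V a + η / 2 ∧ V (a + t) + -c * (r / 2) ^ 3 ≤ V (a - t) := fun t ht ↦ by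
    have ht₀ : 0 < t := by linarith [ht.1]
    have hr' := hrsub ⟨ht₀, ht.2⟩
    refine ⟨hr'.1.le, ?_⟩
    nlinarith [hcubic t ⟨ht₀, hr'.2⟩,
      mul_le_mul_of_nonpos_left (pow_le_pow_left₀ (by positivity) ht.1 3) hc.le]
  exact eventually_integral_sub_mul_exp_pos_of_bump hint hδa (by positivity) (by linarith)
    (hrsub ⟨hr, le_rfl⟩).2 (mul_pos (neg_pos.2 hc) (by positivity)) (by linarith) hsym hbump
    fun u hu ↦ hgap u (Ioo_subset_Ioc_self hu)

theorem lt_integral_mul_div_integral {α : Type*} [MeasurableSpace α] {μ : Measure α}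
    {x g : α → ℝ} {a : ℝ} (hg : Integrable g μ) (hxg : Integrable (fun u ↦ x u * g u) μ)
    (hpos : 0 < ∫ u, g u ∂μ) (h : 0 < ∫ u, (x u - a) * g u ∂μ) :
    a < (∫ u, x u * g u ∂μ) / ∫ u, g u ∂μ := by
  have hsub : ∫ u, (x u - a) * g u ∂μ = ∫ u, x u * g u ∂μ - a * ∫ u, g u ∂μ := by
    rw [← integral_const_mul, ← integral_sub hxg (hg.const_mul a)]
    simp only [sub_mul]
  rw [lt_div_iff₀ hpos]
  linarith

theorem thermal_expansion_positive_of_c₃_neg_general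
    (V : ℝ → ℝ) (a c₃ : ℝ)
    (hcont : ContinuousOn V (Ioi 0))
    (hV0 : Tendsto V (𝓝[>] 0) atTop)
    (hint : ∀ β : ℝ, 0 < β →
      IntegrableOn (fun u => Real.exp (-β * V u)) (Ioi 0) ∧
      IntegrableOn (fun u => u * Real.exp (-β * V u)) (Ioi 0))
    (ha : 0 < a)
    (hmin : ∀ u ∈ Ioi (0:ℝ), u ≠ a → V a < V u)
    (hsmooth : ContDiffAt ℝ 4 V a)
    (hV3 : iteratedDeriv 3 V a = 6 * c₃)
    (hc₃ : c₃ < 0) :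
    ∀ᶠ T : ℝ in 𝓝[>] 0,
      a < (∫ u in Ioi (0:ℝ), u * Real.exp (-T⁻¹ * V u)) /
            (∫ u in Ioi (0:ℝ), Real.exp (-T⁻¹ * V u)) := by
  have hint' : ∀ β > 0, IntegrableOn (fun u ↦ (u - a) * exp (-β * V u)) (Ioi 0) := fun β hβ ↦
    ((hint β hβ).2.sub ((hint β hβ).1.const_mul a)).congr_fun (fun u _ ↦ (sub_mul u a _).symm)
      measurableSet_Ioi
  have hlocmin : IsLocalMin V a := Filter.mem_of_superset (Ioi_mem_nhds ha) fun u hu ↦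
    show V a ≤ V u from (eq_or_ne u a).elim (fun h ↦ h ▸ le_rfl) fun h ↦ (hmin u hu h).le
  have hcubic : ∀ᶠ t in 𝓝[>] 0, V (a + t) - V (a - t) ≤ c₃ * t ^ 3 :=
    ((hsmooth.of_le (by norm_num)).eventually_sub_reflect_le_of_deriv_eq_zero
      hlocmin.deriv_eq_zero (by linarith)).mono fun t ht ↦ by
        rwa [hV3, mul_div_cancel_left₀ _ (by norm_num : (6 : ℝ) ≠ 0)] at ht
  obtain ⟨δ, hδ : 0 < δ, hδsub⟩ := mem_nhdsGT_iff_exists_Ioc_subset.1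
    (hcubic.and (eventually_nhdsWithin_of_eventually_nhds (eventually_lt_nhds ha)))
  have hδa : δ < a := (hδsub ⟨hδ, le_rfl⟩).2
  obtain ⟨η, hη, hgap⟩ := exists_pos_add_le_of_tendsto_nhdsGT (m := V a) (b := a - δ)
    (hcont.mono fun u hu ↦ hu.1) hV0 fun u hu ↦ hmin u hu.1 (by linarith [hu.2])
  have hβ := eventually_integral_sub_mul_exp_pos_of_cubic hint' hsmooth.continuousAt hδ hδa.le
    hη hc₃ (fun t ht ↦ (hδsub ht).1) hgap
  have : NeZero (volume (Ioi (0 : ℝ))) := ⟨by simp⟩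
  filter_upwards [tendsto_inv_nhdsGT_zero.eventually hβ, self_mem_nhdsWithin] with T hT hT0
  exact lt_integral_mul_div_integral (hint _ (inv_pos.2 hT0)).1 (hint _ (inv_pos.2 hT0)).2
    (integral_exp_pos (hint _ (inv_pos.2 hT0)).1) hT

/-- **Macroscopic thermal expansion for `c₃ < 0`.**
If at the unique global minimum `a > 0` the potential satisfies `V''(a) = 2c₂ > 0` and
`V'''(a) = 6c₃` with `c₃ < 0`, then for all sufficiently small `T > 0` the mean spacing
exceeds the ground-state spacing: `m(T) > a`. -/
theorem thermal_expansion_positive_of_c₃_neg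
    (V : ℝ → ℝ) (a c₂ c₃ : ℝ)
    (hcont : ContinuousOn V (Ioi 0))
    (hV0 : Tendsto V (𝓝[>] 0) atTop)
    (hVinf : Tendsto V atTop atTop)
    (hint : ∀ β : ℝ, 0 < β →
      IntegrableOn (fun u => Real.exp (-β * V u)) (Ioi 0) ∧
      IntegrableOn (fun u => u * Real.exp (-β * V u)) (Ioi 0))
    (ha : 0 < a)
    (hmin : ∀ u ∈ Ioi (0:ℝ), u ≠ a → V a < V u)
    (hsmooth : ContDiffAt ℝ 4 V a)
    (hc₂ : 0 < c₂)
    (hV2 : iteratedDeriv 2 V a = 2 * c₂)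
    (hV3 : iteratedDeriv 3 V a = 6 * c₃)
    (hc₃ : c₃ < 0) :
    ∀ᶠ T : ℝ in 𝓝[>] 0,
      a < (∫ u in Ioi (0:ℝ), u * Real.exp (-T⁻¹ * V u)) /
            (∫ u in Ioi (0:ℝ), Real.exp (-T⁻¹ * V u)) :=
  thermal_expansion_positive_of_c₃_neg_general V a c₃ hcont hV0 hint ha hmin hsmooth hV3 hc₃
end

section
/- Let V : (0,∞) → ℝ be continuous with V(u) → ∞ as u → 0⁺ and as u → ∞, such that u ↦ exp(-βV(u)) and u ↦ u·exp(-βV(u)) are integrable on (0,∞) for every β > 0, and such that V attains its global minimum at a unique point a > 0, where it is twice continuously differentiable with V''(a) > 0. Then the mean spacing converges to the ground-state spacing at zero temperature: m(T) → a as T → 0⁺. -/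
/-!
As `β → ∞` the Gibbs weight `exp (-β V)` concentrates near the minimiser `a`. Away from an
`ε`-neighbourhood of `a` the potential exceeds `V a + η` (continuity, compactness and
coercivity), so that part of `∫ |u - a| exp (-β V)` is `O(exp (-(β - 1) (V a + η)))`, while the
partition function is at least of order `exp (-(β - 1) (V a + η / 2))` because `V ≤ V a + η / 2` on
a set of positive measure. Hence `|m - a| ≤ ε + O(exp (-(β - 1) η / 2))`.
-/

open MeasureTheory Set Filter Topology Real

noncomputable def gibbsMean (μ : Measure ℝ) (V : ℝ → ℝ) (β : ℝ) : ℝ :=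
  (∫ u, u * exp (-β * V u) ∂μ) / ∫ u, exp (-β * V u) ∂μ

section Boltzmann

variable {β c v : ℝ}

lemma exp_neg_mul_le_of_le (hβ : 1 ≤ β) (hcv : c ≤ v) :
    exp (-β * v) ≤ exp (-(β - 1) * c) * exp (-v) := by
  rw [← exp_add, exp_le_exp]
  nlinarith

lemma exp_neg_mul_ge_of_le (hβ : 1 ≤ β) (hvc : v ≤ c) :
    exp (-(β - 1) * c) * exp (-v) ≤ exp (-β * v) := by
  rw [← exp_add, exp_le_exp]
  nlinarith

lemma abs_sub_mul_exp_le {u a ε : ℝ} (hε : 0 ≤ ε) (hβ : 1 ≤ β) (hgap : ε ≤ |u - a| → c ≤ v) :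
    |u - a| * exp (-β * v) ≤ ε * exp (-β * v) + exp (-(β - 1) * c) * (|u - a| * exp (-v)) := by
  have hfar_nonneg : 0 ≤ exp (-(β - 1) * c) * (|u - a| * exp (-v)) := by positivity
  rcases lt_or_ge |u - a| ε with hnear | hfar
  · have := mul_le_mul_of_nonneg_right hnear.le (exp_pos (-β * v)).le
    linarith
  · calc |u - a| * exp (-β * v)
        ≤ |u - a| * (exp (-(β - 1) * c) * exp (-v)) :=
          mul_le_mul_of_nonneg_left (exp_neg_mul_le_of_le hβ (hgap hfar)) (abs_nonneg _)
      _ = exp (-(β - 1) * c) * (|u - a| * exp (-v)) := by ring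
      _ ≤ _ := le_add_of_nonneg_left (by positivity)

end Boltzmann

section Integrals

variable {α : Type*} [MeasurableSpace α] {μ : Measure α} {V : α → ℝ} {β c : ℝ}

lemma exp_mul_setIntegral_le_integral {s : Set α} (hβ : 1 ≤ β) (hs : MeasurableSet s)
    (hVs : ∀ u ∈ s, V u ≤ c) (hZ : Integrable (fun u => exp (-β * V u)) μ)
    (hZ₁ : Integrable (fun u => exp (-V u)) μ) :
    exp (-(β - 1) * c) * ∫ u in s, exp (-V u) ∂μ ≤ ∫ u, exp (-β * V u) ∂μ := by
  rw [← integral_const_mul]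
  calc _ ≤ ∫ u in s, exp (-β * V u) ∂μ :=
        setIntegral_mono_on (hZ₁.const_mul _).integrableOn hZ.integrableOn hs
          fun u hu => exp_neg_mul_ge_of_le hβ (hVs u hu)
    _ ≤ _ := setIntegral_le_integral hZ (Eventually.of_forall fun u => (exp_pos _).le)

end Integrals

section SpacingIntegrals

variable {μ : Measure ℝ} {V : ℝ → ℝ} {a β : ℝ}

lemma integrable_abs_sub_mul {w : ℝ → ℝ} (hw : ∀ u, 0 ≤ w u) (hZ : Integrable w μ)
    (hN : Integrable (fun u => u * w u) μ) : Integrable (fun u => |u - a| * w u) μ := by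
  refine (hN.sub (hZ.const_mul a)).norm.congr (Eventually.of_forall fun u => ?_)
  simp only [Pi.sub_apply, ← sub_mul, norm_mul, Real.norm_eq_abs, abs_of_nonneg (hw u)]

lemma abs_integral_mul_sub_le {w : ℝ → ℝ} (hw : ∀ u, 0 ≤ w u) (hZ : Integrable w μ)
    (hN : Integrable (fun u => u * w u) μ) :
    |∫ u, u * w u ∂μ - a * ∫ u, w u ∂μ| ≤ ∫ u, |u - a| * w u ∂μ := by
  rw [← integral_const_mul, ← integral_sub hN (hZ.const_mul a)]
  calc _ = ‖∫ u, (u - a) * w u ∂μ‖ := by simp_rw [sub_mul]; rfl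
    _ ≤ ∫ u, ‖(u - a) * w u‖ ∂μ := norm_integral_le_integral_norm _
    _ = _ := by
        congr 1 with u
        rw [norm_mul, Real.norm_eq_abs, Real.norm_of_nonneg (hw u)]

lemma integral_abs_sub_mul_exp_le {ε c : ℝ} (hε : 0 ≤ ε) (hβ : 1 ≤ β)
    (hZ : Integrable (fun u => exp (-β * V u)) μ)
    (hI : Integrable (fun u => |u - a| * exp (-V u)) μ)
    (hgap : ∀ᵐ u ∂μ, ε ≤ |u - a| → c ≤ V u) :
    ∫ u, |u - a| * exp (-β * V u) ∂μ ≤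
      ε * ∫ u, exp (-β * V u) ∂μ + exp (-(β - 1) * c) * ∫ u, |u - a| * exp (-V u) ∂μ := by
  rw [← integral_const_mul, ← integral_const_mul,
    ← integral_add (hZ.const_mul ε) (hI.const_mul _)]
  refine integral_mono_of_nonneg (Eventually.of_forall fun u => by positivity)
    ((hZ.const_mul ε).add (hI.const_mul _)) ?_
  filter_upwards [hgap] with u hu using abs_sub_mul_exp_le hε hβ hu

end SpacingIntegrals

lemma dist_div_lt_of_abs_sub_mul_lt {x y a ε : ℝ} (hy : 0 < y) (h : |x - a * y| < ε * y) :
    dist (x / y) a < ε := by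
  rwa [Real.dist_eq, div_sub' hy.ne', abs_div, abs_of_pos hy, div_lt_iff₀ hy, mul_comm y]

theorem tendsto_gibbsMean_atTop {μ : Measure ℝ} {V : ℝ → ℝ} {a m : ℝ}
    (hZ : ∀ β > 0, Integrable (fun u => exp (-β * V u)) μ)
    (hN : ∀ β > 0, Integrable (fun u => u * exp (-β * V u)) μ)
    (hgap : ∀ ε > 0, ∃ η > 0, ∀ᵐ u ∂μ, ε ≤ |u - a| → m + η ≤ V u)
    (hlow : ∀ η > 0, ∃ s, MeasurableSet s ∧ μ s ≠ 0 ∧ ∀ u ∈ s, V u ≤ m + η) :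
    Tendsto (gibbsMean μ V) atTop (𝓝 a) := by
  have hZ₁ : Integrable (fun u => exp (-V u)) μ := by simpa using hZ 1 one_pos
  have hI : Integrable (fun u => |u - a| * exp (-V u)) μ := by
    simpa using integrable_abs_sub_mul (fun u => (exp_pos _).le) (hZ 1 one_pos) (hN 1 one_pos)
  rw [Metric.tendsto_nhds]
  intro ε hε
  obtain ⟨η, hη, hfar⟩ := hgap (ε / 2) (half_pos hε)
  obtain ⟨s, hs, hμs, hnear⟩ := hlow (η / 2) (half_pos hη)
  set I := ∫ u, |u - a| * exp (-V u) ∂μ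
  set z := ∫ u in s, exp (-V u) ∂μ
  have hz : 0 < z := by
    have : NeZero (μ.restrict s) := ⟨by rwa [Ne, Measure.restrict_eq_zero]⟩
    exact integral_exp_pos hZ₁.integrableOn
  have htail : Tendsto (fun β => exp (-((β - 1) * (η / 2))) * I / z) atTop (𝓝 0) := by
    have hlin : Tendsto (fun β : ℝ => (β - 1) * (η / 2)) atTop atTop :=
      (tendsto_atTop_add_const_right _ (-1) tendsto_id).atTop_mul_const (half_pos hη)
    simpa using ((tendsto_exp_neg_atTop_nhds_zero.comp hlin).mul_const I).div_const z
  filter_upwards [htail.eventually_lt_const (half_pos hε), eventually_ge_atTop 1]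
    with β htβ hβ
  have hβ₀ : 0 < β := one_pos.trans_le hβ
  set Z := ∫ u, exp (-β * V u) ∂μ
  set t := exp (-((β - 1) * (η / 2))) * I / z
  have hlower : exp (-(β - 1) * (m + η / 2)) * z ≤ Z :=
    exp_mul_setIntegral_le_integral hβ hs hnear (hZ β hβ₀) hZ₁
  have hZpos : 0 < Z := lt_of_lt_of_le (by positivity) hlower
  have hfar_le : exp (-(β - 1) * (m + η)) * I ≤ t * Z := calc
    exp (-(β - 1) * (m + η)) * I = t * (exp (-(β - 1) * (m + η / 2)) * z) := by
        simp only [t]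
        rw [show -(β - 1) * (m + η) = -((β - 1) * (η / 2)) + -(β - 1) * (m + η / 2) by ring,
          exp_add]
        field_simp
    _ ≤ t * Z := mul_le_mul_of_nonneg_left hlower (by positivity)
  have hdev : |∫ u, u * exp (-β * V u) ∂μ - a * Z| < ε * Z := calc
    _ ≤ ∫ u, |u - a| * exp (-β * V u) ∂μ :=
        abs_integral_mul_sub_le (fun u => (exp_pos _).le) (hZ β hβ₀) (hN β hβ₀)
    _ ≤ ε / 2 * Z + exp (-(β - 1) * (m + η)) * I :=
        integral_abs_sub_mul_exp_le (half_pos hε).le hβ (hZ β hβ₀) hI hfar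
    _ < ε * Z := by nlinarith
  exact dist_div_lt_of_abs_sub_mul_lt hZpos hdev

section HalfLine

variable {V : ℝ → ℝ} {a : ℝ}

lemma exists_pos_forall_add_le_of_unique_min {ε : ℝ} (hcont : ContinuousOn V (Ioi 0))
    (hV0 : Tendsto V (𝓝[>] 0) atTop) (hVinf : Tendsto V atTop atTop)
    (hmin : ∀ u ∈ Ioi (0:ℝ), u ≠ a → V a < V u) (hε : 0 < ε) :
    ∃ η > 0, ∀ u ∈ Ioi (0:ℝ), ε ≤ |u - a| → V a + η ≤ V u := by
  obtain ⟨r, hr, hnear0⟩ := mem_nhdsGT_iff_exists_Ioo_subset.mp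
    (hV0.eventually (eventually_ge_atTop (V a + 1)))
  obtain ⟨R, hnearInf⟩ := eventually_atTop.mp (hVinf.eventually (eventually_ge_atTop (V a + 1)))
  set K := Icc r R ∩ {u | ε ≤ |u - a|}
  have hK : IsCompact K := isCompact_Icc.inter_right
    (isClosed_le continuous_const (continuous_id.sub continuous_const).abs)
  have hK_pos : K ⊆ Ioi 0 := fun u hu => lt_of_lt_of_le hr hu.1.1
  obtain ⟨c, hc, hKc⟩ := hK.exists_forall_le' (hcont.mono hK_pos) fun u hu =>
    hmin u (hK_pos hu) fun hua => by have := hu.2; simp [hua] at this; linarith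
  have h₁ := min_le_left 1 (c - V a)
  have h₂ := min_le_right 1 (c - V a)
  refine ⟨min 1 (c - V a), lt_min one_pos (sub_pos.mpr hc), fun u hu hua => ?_⟩
  rcases lt_or_ge u r with hur | hru
  · linarith [show V a + 1 ≤ V u from hnear0 ⟨hu, hur⟩]
  rcases le_or_gt u R with huR | hRu
  · linarith [hKc u ⟨⟨hru, huR⟩, hua⟩]
  · linarith [hnearInf u hRu.le]

lemma exists_restrict_Ioi_ne_zero_forall_le (hcont : ContinuousOn V (Ioi 0)) (ha : 0 < a)
    {η : ℝ} (hη : 0 < η) :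
    ∃ s, MeasurableSet s ∧ volume.restrict (Ioi 0) s ≠ 0 ∧ ∀ u ∈ s, V u ≤ V a + η := by
  obtain ⟨t, hVt, ht, hat⟩ := eventually_nhds_iff.mp
    ((hcont.continuousAt (Ioi_mem_nhds ha)).eventually (Iic_mem_nhds (lt_add_of_pos_right _ hη)))
  refine ⟨t, ht.measurableSet, ?_, hVt⟩
  rw [Measure.restrict_apply ht.measurableSet]
  exact (ht.inter isOpen_Ioi).measure_ne_zero volume ⟨a, hat, ha⟩

end HalfLine

theorem mean_spacing_tendsto_ground_state_general
    (V : ℝ → ℝ) (a : ℝ)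
    (hcont : ContinuousOn V (Ioi 0))
    (hV0 : Tendsto V (𝓝[>] 0) atTop)
    (hVinf : Tendsto V atTop atTop)
    (hint : ∀ β : ℝ, 0 < β →
      IntegrableOn (fun u => Real.exp (-β * V u)) (Ioi 0) ∧
      IntegrableOn (fun u => u * Real.exp (-β * V u)) (Ioi 0))
    (ha : 0 < a)
    (hmin : ∀ u ∈ Ioi (0:ℝ), u ≠ a → V a < V u) :
    Tendsto (fun T : ℝ =>
        (∫ u in Ioi (0:ℝ), u * Real.exp (-T⁻¹ * V u)) /
          (∫ u in Ioi (0:ℝ), Real.exp (-T⁻¹ * V u)))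
      (𝓝[>] 0) (𝓝 a) := by
  have hgap (ε : ℝ) (hε : 0 < ε) :
      ∃ η > 0, ∀ᵐ u ∂volume.restrict (Ioi 0), ε ≤ |u - a| → V a + η ≤ V u := by
    obtain ⟨η, hη, hgap⟩ := exists_pos_forall_add_le_of_unique_min hcont hV0 hVinf hmin hε
    exact ⟨η, hη, ae_restrict_of_forall_mem measurableSet_Ioi hgap⟩
  exact (tendsto_gibbsMean_atTop (fun β hβ => (hint β hβ).1) (fun β hβ => (hint β hβ).2) hgap
    fun η hη => exists_restrict_Ioi_ne_zero_forall_le hcont ha hη).comp tendsto_inv_nhdsGT_zero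

/-- **Zero-temperature limit of the mean spacing.**
For a potential with a unique nondegenerate global minimum at `a > 0`, the mean spacing
converges to the ground-state spacing: `m(T) → a` as `T → 0⁺`. -/
theorem mean_spacing_tendsto_ground_state
    (V : ℝ → ℝ) (a : ℝ)
    (hcont : ContinuousOn V (Ioi 0))
    (hV0 : Tendsto V (𝓝[>] 0) atTop)
    (hVinf : Tendsto V atTop atTop)
    (hint : ∀ β : ℝ, 0 < β →
      IntegrableOn (fun u => Real.exp (-β * V u)) (Ioi 0) ∧
      IntegrableOn (fun u => u * Real.exp (-β * V u)) (Ioi 0))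
    (ha : 0 < a)
    (hmin : ∀ u ∈ Ioi (0:ℝ), u ≠ a → V a < V u)
    (hsmooth : ContDiffAt ℝ 2 V a)
    (hV2 : 0 < iteratedDeriv 2 V a) :
    Tendsto (fun T : ℝ =>
        (∫ u in Ioi (0:ℝ), u * Real.exp (-T⁻¹ * V u)) /
          (∫ u in Ioi (0:ℝ), Real.exp (-T⁻¹ * V u)))
      (𝓝[>] 0) (𝓝 a) :=
  mean_spacing_tendsto_ground_state_general V a hcont hV0 hVinf hint ha hmin
end

section
/- Let V : (0,∞) → ℝ be continuous with V(u) → ∞ as u → 0⁺ and as u → ∞, such that for every β > 0 the functions u ↦ exp(-βV(u)), u ↦ u·exp(-βV(u)), u ↦ V(u)·exp(-βV(u)) and u ↦ u·V(u)·exp(-βV(u)) are integrable on (0,∞). Then the function β ↦ m̃(β) = (∫₀^∞ u·exp(-βV(u)) du)/(∫₀^∞ exp(-βV(u)) du) is differentiable on (0,∞), and its derivative equals minus the Gibbs covariance of u and V(u): dm̃/dβ = -(⟨u·V(u)⟩_β - ⟨u⟩_β·⟨V(u)⟩_β), where ⟨f⟩_β = (∫₀^∞ f(u)·exp(-βV(u))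 du)/(∫₀^∞ exp(-βV(u)) du). -/
open MeasureTheory Set Filter Topology

/-!
Numerator and denominator of `m̃(β)` are differentiated under the integral sign: for `b` in
`[β/2, 3β/2]` one has `exp (-b x) ≤ exp (-(β/2) x) + exp (-(3β/2) x)` whatever the sign of `x`,
so the integrability of `u V(u) e^{-bV(u)}` and `V(u) e^{-bV(u)}` at `β/2` and `3β/2` dominates the
`b`-derivatives near `β`. The partition function is positive, and the quotient rule, divided
through by `Z²`, is the Gibbs covariance.
-/

theorem exp_neg_mul_le_add_of_mem_Icc {a b c x : ℝ} (hb : b ∈ Icc a c) :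
    Real.exp (-b * x) ≤ Real.exp (-a * x) + Real.exp (-c * x) := by
  rcases le_total 0 x with hx | hx
  · have : Real.exp (-b * x) ≤ Real.exp (-a * x) :=
      Real.exp_le_exp.2 (by nlinarith [hb.1])
    linarith [Real.exp_pos (-c * x)]
  · have : Real.exp (-b * x) ≤ Real.exp (-c * x) :=
      Real.exp_le_exp.2 (by nlinarith [hb.2])
    linarith [Real.exp_pos (-a * x)]

theorem hasDerivAt_mul_exp_neg_mul (w v b : ℝ) :
    HasDerivAt (fun b : ℝ => w * Real.exp (-b * v)) (-(w * v * Real.exp (-b * v))) b :=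
  ((((hasDerivAt_neg b).mul_const v).exp).const_mul w).congr_deriv (by ring)

theorem HasDerivAt.div_of_neg_deriv {N Z : ℝ → ℝ} {A B x : ℝ} (hN : HasDerivAt N (-A) x)
    (hZ : HasDerivAt Z (-B) x) (hZx : Z x ≠ 0) :
    HasDerivAt (fun b => N b / Z b) (-(A / Z x - N x / Z x * (B / Z x))) x := by
  refine (hN.div hZ hZx).congr_deriv ?_
  field_simp
  ring

section

variable {α : Type*} [MeasurableSpace α] {μ : Measure α} {w V : α → ℝ}

theorem integrable_abs_mul_exp_neg_mul {b : ℝ}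
    (h : Integrable (fun u => w u * Real.exp (-b * V u)) μ) :
    Integrable (fun u => |w u| * Real.exp (-b * V u)) μ := by
  refine h.abs.congr (Eventually.of_forall fun u => ?_)
  simp only [abs_mul, abs_of_pos (Real.exp_pos _)]

theorem hasDerivAt_integral_mul_exp_neg_mul {β : ℝ} (hβ : 0 < β)
    (hw : ∀ b, 0 < b → Integrable (fun u => w u * Real.exp (-b * V u)) μ)
    (hwV : ∀ b, 0 < b → Integrable (fun u => w u * V u * Real.exp (-b * V u)) μ) :
    HasDerivAt (fun b => ∫ u, w u * Real.exp (-b * V u) ∂μ)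
      (-∫ u, w u * V u * Real.exp (-β * V u) ∂μ) β := by
  have hβ₁ : 0 < β / 2 := by linarith
  have hβ₂ : 0 < 3 * β / 2 := by linarith
  rw [← integral_neg]
  refine (hasDerivAt_integral_of_dominated_loc_of_deriv_le
    (bound := fun u => |w u * V u| * Real.exp (-(β / 2) * V u) +
      |w u * V u| * Real.exp (-(3 * β / 2) * V u))
    (Metric.ball_mem_nhds β hβ₁)
    ((eventually_gt_nhds hβ).mono fun b hb => (hw b hb).aestronglyMeasurable) (hw β hβ)
    (hwV β hβ).neg.aestronglyMeasurable ?_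
    ((integrable_abs_mul_exp_neg_mul (hwV _ hβ₁)).add
      (integrable_abs_mul_exp_neg_mul (hwV _ hβ₂)))
    (Eventually.of_forall fun u b _ => hasDerivAt_mul_exp_neg_mul (w u) (V u) b)).2
  refine Eventually.of_forall fun u b hb => ?_
  have hb' : b ∈ Icc (β / 2) (3 * β / 2) := by
    rw [Metric.mem_ball, Real.dist_eq, abs_lt] at hb
    constructor <;> linarith
  rw [norm_neg, Real.norm_eq_abs, abs_mul, abs_of_pos (Real.exp_pos _), ← mul_add]
  exact mul_le_mul_of_nonneg_left (exp_neg_mul_le_add_of_mem_Icc hb') (abs_nonneg _)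

end

theorem mean_spacing_deriv_eq_neg_covariance_general
    (V : ℝ → ℝ)
    (hint : ∀ β : ℝ, 0 < β →
      IntegrableOn (fun u => Real.exp (-β * V u)) (Ioi 0) ∧
      IntegrableOn (fun u => u * Real.exp (-β * V u)) (Ioi 0) ∧
      IntegrableOn (fun u => V u * Real.exp (-β * V u)) (Ioi 0) ∧
      IntegrableOn (fun u => u * V u * Real.exp (-β * V u)) (Ioi 0)) :
    ∀ β : ℝ, 0 < β →
      HasDerivAt
        (fun b : ℝ =>
          (∫ u in Ioi (0:ℝ), u * Real.exp (-b * V u)) /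
            (∫ u in Ioi (0:ℝ), Real.exp (-b * V u)))
        (-((∫ u in Ioi (0:ℝ), u * V u * Real.exp (-β * V u)) /
              (∫ u in Ioi (0:ℝ), Real.exp (-β * V u)) -
            ((∫ u in Ioi (0:ℝ), u * Real.exp (-β * V u)) /
                (∫ u in Ioi (0:ℝ), Real.exp (-β * V u))) *
              ((∫ u in Ioi (0:ℝ), V u * Real.exp (-β * V u)) /
                (∫ u in Ioi (0:ℝ), Real.exp (-β * V u)))))
        β := by
  intro β hβ
  have hN := hasDerivAt_integral_mul_exp_neg_mul (w := id) hβ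
    (fun b hb => (hint b hb).2.1) (fun b hb => (hint b hb).2.2.2)
  have hZ := hasDerivAt_integral_mul_exp_neg_mul (w := 1) hβ
    (fun b hb => by simpa [IntegrableOn] using (hint b hb).1)
    (fun b hb => by simpa [IntegrableOn] using (hint b hb).2.2.1)
  simp only [id, Pi.one_apply, one_mul] at hN hZ
  have _ : NeZero ((volume : Measure ℝ).restrict (Ioi 0)) := ⟨by simp⟩
  exact hN.div_of_neg_deriv hZ (integral_exp_pos (hint β hβ).1).ne'

/-- **Derivative of the mean spacing in inverse temperature.**
The mean spacing `m̃(β) = ⟨u⟩_β` is differentiable on `(0,∞)` with derivative equal to minus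
the Gibbs covariance of `u` and `V(u)`:
`dm̃/dβ = -(⟨u·V(u)⟩_β - ⟨u⟩_β·⟨V(u)⟩_β)`. -/
theorem mean_spacing_deriv_eq_neg_covariance
    (V : ℝ → ℝ)
    (hcont : ContinuousOn V (Ioi 0))
    (hV0 : Tendsto V (𝓝[>] 0) atTop)
    (hVinf : Tendsto V atTop atTop)
    (hint : ∀ β : ℝ, 0 < β →
      IntegrableOn (fun u => Real.exp (-β * V u)) (Ioi 0) ∧
      IntegrableOn (fun u => u * Real.exp (-β * V u)) (Ioi 0) ∧
      IntegrableOn (fun u => V u * Real.exp (-β * V u)) (Ioi 0) ∧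
      IntegrableOn (fun u => u * V u * Real.exp (-β * V u)) (Ioi 0)) :
    ∀ β : ℝ, 0 < β →
      HasDerivAt
        (fun b : ℝ =>
          (∫ u in Ioi (0:ℝ), u * Real.exp (-b * V u)) /
            (∫ u in Ioi (0:ℝ), Real.exp (-b * V u)))
        (-((∫ u in Ioi (0:ℝ), u * V u * Real.exp (-β * V u)) /
              (∫ u in Ioi (0:ℝ), Real.exp (-β * V u)) -
            ((∫ u in Ioi (0:ℝ), u * Real.exp (-β * V u)) /
                (∫ u in Ioi (0:ℝ), Real.exp (-β * V u))) *
              ((∫ u in Ioi (0:ℝ), V u * Real.exp (-β * V u)) /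
                (∫ u in Ioi (0:ℝ), Real.exp (-β * V u)))))
        β :=
  mean_spacing_deriv_eq_neg_covariance_general V hint
end

section
/- Fix β > 0 and let V : (0,∞) → ℝ be continuous with V(u) → ∞ as u → 0⁺, such that there exists F₀ > 0 so that for all F with |F| < F₀ the functions u ↦ exp(-β(V(u) - Fu)), u ↦ u·exp(-β(V(u) - Fu)), and u ↦ u²·exp(-β(V(u) - Fu)) are integrable on (0,∞). Then the function F ↦ m(T,F) is differentiable at F = 0, and its derivative (the elastic modulus) equals R = ∂m(T,F)/∂F|_{F=0} = β·(⟨u²⟩ - ⟨u⟩²), where ⟨f⟩ = (∫₀^∞ f(u)·exp(-βV(u)) du)/(∫₀^∞ exp(-βV(u)) du); moreover R > 0. -/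
/-!
Write `Z_k(F) = ∫₀^∞ u^k e^{-β(V(u) - F u)} du`, so that the mean spacing is `Z₁ / Z₀`.
For `F' < G` and `u > 0` the `F'`-derivative `β u^{k+1} e^{-β(V(u) - F' u)}` of the integrand is
dominated by its value at `G`, so `Z_k' = β Z_{k+1}` whenever the moments are integrable slightly
beyond `F`. The quotient rule then gives `(Z₁/Z₀)' = β (Z₂/Z₀ - (Z₁/Z₀)²)`, which is `β` times
`∫ (u - m)² e^{-β(V(u) - F u)} du / Z₀` with `m = Z₁/Z₀`; this is positive because the integrand
vanishes only at `u = m`.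
-/

open MeasureTheory Set Filter Topology

theorem integral_pos_of_ae_pos {α : Type*} [MeasurableSpace α] {μ : Measure α} (hμ : μ ≠ 0)
    {f : α → ℝ} (hf : Integrable f μ) (hpos : ∀ᵐ x ∂μ, 0 < f x) : 0 < ∫ x, f x ∂μ := by
  rw [integral_pos_iff_support_of_nonneg_ae (hpos.mono fun _ hx => hx.le) hf]
  have hsupp : Function.support f =ᵐ[μ] (univ : Set α) :=
    ae_eq_univ.2 (ae_iff.1 (hpos.mono fun _ hx => hx.ne'))
  rw [measure_congr hsupp]
  exact Measure.measure_univ_pos.2 hμ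

namespace SpacingChain

open Real

variable (β : ℝ) (V : ℝ → ℝ)

noncomputable def weight (k : ℕ) (F u : ℝ) : ℝ := u ^ k * exp (-β * (V u - F * u))

noncomputable def moment (k : ℕ) (F : ℝ) : ℝ := ∫ u in Ioi (0:ℝ), weight β V k F u

noncomputable def meanSpacing (F : ℝ) : ℝ := moment β V 1 F / moment β V 0 F

noncomputable def variance (F : ℝ) : ℝ :=
  moment β V 2 F / moment β V 0 F - (moment β V 1 F / moment β V 0 F) ^ 2

variable {β V}

theorem weight_succ (k : ℕ) (F u : ℝ) : weight β V (k + 1) F u = u * weight β V k F u := by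
  simp only [weight, pow_succ]; ring

theorem weight_eq_mul_exp (k : ℕ) (F G u : ℝ) :
    weight β V k G u = weight β V k F u * exp (β * (G - F) * u) := by
  simp only [weight, mul_assoc, ← exp_add]; ring_nf

theorem weight_pos {u : ℝ} (hu : 0 < u) (k : ℕ) (F : ℝ) : 0 < weight β V k F u := by
  unfold weight; positivity

theorem weight_le_weight (hβ : 0 ≤ β) {u : ℝ} (hu : 0 ≤ u) (k : ℕ) {F G : ℝ} (hFG : F ≤ G) :
    weight β V k F u ≤ weight β V k G u := by
  refine mul_le_mul_of_nonneg_left (exp_le_exp.2 ?_) (pow_nonneg hu k)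
  nlinarith [mul_le_mul_of_nonneg_right hFG hu]

theorem hasDerivAt_weight (k : ℕ) (F u : ℝ) :
    HasDerivAt (fun F => weight β V k F u) (β * weight β V (k + 1) F u) F := by
  have hexp : HasDerivAt (fun F => -β * (V u - F * u)) (β * u) F := by
    simpa using ((hasDerivAt_id F).mul_const u).const_sub (V u) |>.const_mul (-β)
  refine ((hexp.exp).const_mul (u ^ k)).congr_deriv ?_
  simp only [weight, pow_succ]; ring

theorem hasDerivAt_moment (hβ : 0 ≤ β) {k : ℕ} {F G : ℝ} (hFG : F < G)
    (hk : IntegrableOn (weight β V k F) (Ioi 0))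
    (hk' : IntegrableOn (weight β V (k + 1) G) (Ioi 0)) :
    HasDerivAt (moment β V k) (β * moment β V (k + 1) F) F := by
  have hmeas : ∀ F', AEStronglyMeasurable (weight β V k F') (volume.restrict (Ioi 0)) := by
    intro F'
    simp_rw [funext (weight_eq_mul_exp (β := β) (V := V) k F F')]
    exact hk.aestronglyMeasurable.mul (by fun_prop : Continuous _).aestronglyMeasurable
  have hbound : ∀ᵐ u ∂volume.restrict (Ioi 0), ∀ F' ∈ Iio G,
      ‖β * weight β V (k + 1) F' u‖ ≤ β * weight β V (k + 1) G u := by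
    filter_upwards [ae_restrict_mem measurableSet_Ioi] with u hu F' hF'
    rw [Real.norm_of_nonneg (mul_nonneg hβ (weight_pos hu _ _).le)]
    exact mul_le_mul_of_nonneg_left (weight_le_weight hβ hu.le _ (le_of_lt hF')) hβ
  have hderiv := hasDerivAt_integral_of_dominated_loc_of_deriv_le (Iio_mem_nhds hFG)
    (Eventually.of_forall hmeas) hk ?_ hbound (hk'.const_mul β)
    (Eventually.of_forall fun u F' _ => hasDerivAt_weight k F' u)
  · rw [moment, ← integral_const_mul]
    exact hderiv.2
  · simp_rw [weight_succ]
    exact (measurable_id.aestronglyMeasurable.mul hk.aestronglyMeasurable).const_mul β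

theorem moment_pos {k : ℕ} {F : ℝ} (hk : IntegrableOn (weight β V k F) (Ioi 0)) :
    0 < moment β V k F :=
  integral_pos_of_ae_pos (by simp [Measure.restrict_eq_zero]) hk
    ((ae_restrict_mem measurableSet_Ioi).mono fun _ hu => weight_pos hu k F)

theorem variance_pos {F : ℝ} (h0 : IntegrableOn (weight β V 0 F) (Ioi 0))
    (h1 : IntegrableOn (weight β V 1 F) (Ioi 0)) (h2 : IntegrableOn (weight β V 2 F) (Ioi 0)) :
    0 < variance β V F := by
  set m := meanSpacing β V F
  have hexpand : (fun u => (u - m) ^ 2 * weight β V 0 F u) =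
      fun u => weight β V 2 F u - 2 * m * weight β V 1 F u + m ^ 2 * weight β V 0 F u := by
    funext u; simp only [weight]; ring
  have hint : IntegrableOn (fun u => (u - m) ^ 2 * weight β V 0 F u) (Ioi 0) := by
    rw [hexpand]; exact (h2.sub (h1.const_mul _)).add (h0.const_mul _)
  have hcentral : 0 < ∫ u in Ioi (0:ℝ), (u - m) ^ 2 * weight β V 0 F u := by
    refine integral_pos_of_ae_pos (by simp [Measure.restrict_eq_zero]) hint ?_
    filter_upwards [ae_restrict_mem measurableSet_Ioi, ae_restrict_of_ae (Measure.ae_ne volume m)]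
      with u hu hum
    exact mul_pos (sq_pos_of_ne_zero (sub_ne_zero.2 hum)) (weight_pos hu 0 F)
  have hval : ∫ u in Ioi (0:ℝ), (u - m) ^ 2 * weight β V 0 F u =
      moment β V 2 F - 2 * m * moment β V 1 F + m ^ 2 * moment β V 0 F := by
    rw [hexpand, integral_add ?_ (h0.const_mul _), integral_sub h2 (h1.const_mul _),
      integral_const_mul, integral_const_mul]
    · rfl
    · exact h2.sub (h1.const_mul _)
  have hM0 := moment_pos h0
  have hvariance : variance β V F =
      (∫ u in Ioi (0:ℝ), (u - m) ^ 2 * weight β V 0 F u) / moment β V 0 F := by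
    rw [hval, variance]; simp only [m, meanSpacing]; field_simp; ring
  rw [hvariance]; positivity

theorem hasDerivAt_meanSpacing (hβ : 0 ≤ β) {F G : ℝ} (hFG : F < G)
    (h0 : IntegrableOn (weight β V 0 F) (Ioi 0)) (h1 : IntegrableOn (weight β V 1 F) (Ioi 0))
    (h1' : IntegrableOn (weight β V 1 G) (Ioi 0)) (h2' : IntegrableOn (weight β V 2 G) (Ioi 0)) :
    HasDerivAt (meanSpacing β V) (β * variance β V F) F := by
  have hM0 := (moment_pos h0).ne'
  have hM0' := hasDerivAt_moment hβ hFG h0 h1'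
  have hM1' := hasDerivAt_moment hβ hFG h1 h2'
  refine (hM1'.div hM0' hM0).congr_deriv ?_
  rw [variance]; field_simp

end SpacingChain

open SpacingChain

theorem elastic_modulus_general
    (β : ℝ) (hβ : 0 < β)
    (V : ℝ → ℝ)
    (F₀ : ℝ) (hF₀ : 0 < F₀)
    (hint : ∀ F : ℝ, |F| < F₀ →
      IntegrableOn (fun u => Real.exp (-β * (V u - F * u))) (Ioi 0) ∧
      IntegrableOn (fun u => u * Real.exp (-β * (V u - F * u))) (Ioi 0) ∧
      IntegrableOn (fun u => u ^ 2 * Real.exp (-β * (V u - F * u))) (Ioi 0)) :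
    HasDerivAt
      (fun F : ℝ =>
        (∫ u in Ioi (0:ℝ), u * Real.exp (-β * (V u - F * u))) /
          (∫ u in Ioi (0:ℝ), Real.exp (-β * (V u - F * u))))
      (β * ((∫ u in Ioi (0:ℝ), u ^ 2 * Real.exp (-β * V u)) /
            (∫ u in Ioi (0:ℝ), Real.exp (-β * V u)) -
          ((∫ u in Ioi (0:ℝ), u * Real.exp (-β * V u)) /
              (∫ u in Ioi (0:ℝ), Real.exp (-β * V u))) ^ 2))
      0 ∧
    0 < β * ((∫ u in Ioi (0:ℝ), u ^ 2 * Real.exp (-β * V u)) /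
          (∫ u in Ioi (0:ℝ), Real.exp (-β * V u)) -
        ((∫ u in Ioi (0:ℝ), u * Real.exp (-β * V u)) /
            (∫ u in Ioi (0:ℝ), Real.exp (-β * V u))) ^ 2) := by
  have hweight : ∀ F, |F| < F₀ → ∀ k ≤ 2, IntegrableOn (weight β V k F) (Ioi 0) := by
    intro F hF k hk
    obtain ⟨h0, h1, h2⟩ := hint F hF
    interval_cases k <;> unfold weight
    · simpa using h0
    · simpa using h1
    · simpa using h2
  have hw := hweight 0 (by simpa using hF₀)
  have hw' := hweight (F₀ / 2) (by rw [abs_of_pos (half_pos hF₀)]; exact half_lt_self hF₀)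
  have key := And.intro
    (hasDerivAt_meanSpacing hβ.le (half_pos hF₀) (hw 0 (by norm_num)) (hw 1 (by norm_num))
      (hw' 1 (by norm_num)) (hw' 2 le_rfl))
    (mul_pos hβ (variance_pos (hw 0 (by norm_num)) (hw 1 (by norm_num)) (hw 2 le_rfl)))
  unfold meanSpacing variance moment weight at key
  simpa using key

/-- **The elastic modulus.**
The mean spacing `F ↦ m(T,F)` under an external force `F` is differentiable at `F = 0` with
derivative `R = β·(⟨u²⟩ - ⟨u⟩²)`, the Gibbs variance of the spacing times `β`; moreover
`R > 0`. -/
theorem elastic_modulus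
    (β : ℝ) (hβ : 0 < β)
    (V : ℝ → ℝ)
    (hcont : ContinuousOn V (Ioi 0))
    (hV0 : Tendsto V (𝓝[>] 0) atTop)
    (F₀ : ℝ) (hF₀ : 0 < F₀)
    (hint : ∀ F : ℝ, |F| < F₀ →
      IntegrableOn (fun u => Real.exp (-β * (V u - F * u))) (Ioi 0) ∧
      IntegrableOn (fun u => u * Real.exp (-β * (V u - F * u))) (Ioi 0) ∧
      IntegrableOn (fun u => u ^ 2 * Real.exp (-β * (V u - F * u))) (Ioi 0)) :
    HasDerivAt
      (fun F : ℝ =>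
        (∫ u in Ioi (0:ℝ), u * Real.exp (-β * (V u - F * u))) /
          (∫ u in Ioi (0:ℝ), Real.exp (-β * (V u - F * u))))
      (β * ((∫ u in Ioi (0:ℝ), u ^ 2 * Real.exp (-β * V u)) /
            (∫ u in Ioi (0:ℝ), Real.exp (-β * V u)) -
          ((∫ u in Ioi (0:ℝ), u * Real.exp (-β * V u)) /
              (∫ u in Ioi (0:ℝ), Real.exp (-β * V u))) ^ 2))
      0 ∧
    0 < β * ((∫ u in Ioi (0:ℝ), u ^ 2 * Real.exp (-β * V u)) /
          (∫ u in Ioi (0:ℝ), Real.exp (-β * V u)) -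
        ((∫ u in Ioi (0:ℝ), u * Real.exp (-β * V u)) /
            (∫ u in Ioi (0:ℝ), Real.exp (-β * V u))) ^ 2) :=
  elastic_modulus_general β hβ V F₀ hF₀ hint
end

section
/- Fix β > 0 and let V : (0,∞) → ℝ be continuous with V(u) → ∞ as u → 0⁺, such that there exists F₀ > 0 so that for all F with |F| < F₀ the functions u ↦ exp(-β(V(u) - Fu)), u ↦ u·exp(-β(V(u) - Fu)), and u ↦ u²·exp(-β(V(u) - Fu)) are integrable on (0,∞). Then the elastic expansion satisfies Hooke's law: m(T,F) - m(T,0) = R·F + o(F) as F → 0, where R = β·(⟨u²⟩ - ⟨u⟩²) > 0 is the variance of the spacing under the Gibbs measure at F = 0 multiplied by β. -/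
/-!
Let `ν` be the unnormalised Gibbs measure `exp (-β V u) du` on `(0, ∞)`. Tilting by the force
multiplies it by `exp (β F u)`, so the mean spacing `m(T, F)` is `K' (β F)`, where `K` is the
cumulant generating function of the spacing under `ν`. The integrability hypothesis puts `0`
in the interior of the domain of `K`, where `K` is analytic; Hooke's law is then the first-order
expansion of `K'` at `0`, with `R = β K''(0)`, and `K''(0)` is the variance of the spacing, which
is positive because `ν` has an everywhere positive density and so is not concentrated at a point.
-/

open MeasureTheory Set Filter Topology Asymptotics

namespace ProbabilityTheory

variable {Ω : Type*} {m : MeasurableSpace Ω} {X : Ω → ℝ} {μ : Measure Ω} {v : ℝ}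

lemma hasDerivAt_deriv_cgf (h : v ∈ interior (integrableExpSet X μ)) :
    HasDerivAt (deriv (cgf X μ)) (iteratedDeriv 2 (cgf X μ) v) v := by
  rw [iteratedDeriv_succ, iteratedDeriv_one]
  exact (analyticAt_cgf h).deriv.differentiableAt.hasDerivAt

lemma iteratedDeriv_two_cgf_pos (h : v ∈ interior (integrableExpSet X μ))
    (hX : ∀ c, ¬ X =ᵐ[μ] fun _ => c) : 0 < iteratedDeriv 2 (cgf X μ) v := by
  have hμ : μ ≠ 0 := fun hμ => hX 0 (by simp [hμ, EventuallyEq])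
  have hv : v ∈ integrableExpSet X μ := interior_subset h
  rw [iteratedDeriv_two_cgf_eq_integral h]
  refine div_pos ?_ (mgf_pos' hμ hv)
  set c := deriv (cgf X μ) v
  have hint : Integrable (fun ω => (X ω - c) ^ 2 * Real.exp (v * X ω)) μ := by
    have h2 := integrable_pow_mul_exp_of_mem_interior_integrableExpSet h 2
    have h1 := integrable_pow_mul_exp_of_mem_interior_integrableExpSet h 1
    have h0 : Integrable (fun ω => Real.exp (v * X ω)) μ := hv
    refine ((h2.sub (h1.const_mul (2 * c))).add (h0.const_mul (c ^ 2))).congr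
      (ae_of_all _ fun ω => ?_)
    simp only [Pi.add_apply, Pi.sub_apply]
    ring
  rw [integral_pos_iff_support_of_nonneg (fun ω => by positivity) hint]
  have hsupp :
      Function.support (fun ω => (X ω - c) ^ 2 * Real.exp (v * X ω)) = {ω | X ω ≠ c} := by
    ext ω
    simp [sub_eq_zero, Real.exp_ne_zero]
  rw [hsupp, pos_iff_ne_zero]
  exact hX c

end ProbabilityTheory

open ProbabilityTheory

noncomputable def gibbsMeasure (β : ℝ) (V : ℝ → ℝ) : Measure ℝ :=
  (volume.restrict (Ioi 0)).withDensity fun u => ENNReal.ofReal (Real.exp (-β * V u))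

section Gibbs

variable {β : ℝ} {V : ℝ → ℝ}

lemma integral_gibbsMeasure
    (hV : AEMeasurable (fun u => Real.exp (-β * V u)) (volume.restrict (Ioi 0)))
    (g : ℝ → ℝ) :
    ∫ u, g u ∂gibbsMeasure β V = ∫ u in Ioi 0, Real.exp (-β * V u) * g u := by
  rw [gibbsMeasure, integral_withDensity_eq_integral_toReal_smul₀ hV.ennreal_ofReal
    (ae_of_all _ fun _ => ENNReal.ofReal_lt_top)]
  simp only [ENNReal.toReal_ofReal (Real.exp_pos _).le, smul_eq_mul]

lemma integrable_gibbsMeasure_iff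
    (hV : AEMeasurable (fun u => Real.exp (-β * V u)) (volume.restrict (Ioi 0)))
    {g : ℝ → ℝ} :
    Integrable g (gibbsMeasure β V) ↔
      IntegrableOn (fun u => Real.exp (-β * V u) * g u) (Ioi 0) := by
  rw [gibbsMeasure, integrable_withDensity_iff_integrable_smul₀' hV.ennreal_ofReal
    (ae_of_all _ fun _ => ENNReal.ofReal_lt_top)]
  simp only [ENNReal.toReal_ofReal (Real.exp_pos _).le, smul_eq_mul, IntegrableOn]

lemma not_ae_eq_const_gibbsMeasure
    (hV : AEMeasurable (fun u => Real.exp (-β * V u)) (volume.restrict (Ioi 0))) (c : ℝ) :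
    ¬ id =ᵐ[gibbsMeasure β V] fun _ => c := by
  intro h
  rw [EventuallyEq, gibbsMeasure, ae_withDensity_iff' hV.ennreal_ofReal,
    ae_restrict_iff' measurableSet_Ioi] at h
  have h_null : volume (Ioi (0:ℝ)) = 0 := by
    rw [measure_eq_zero_iff_ae_notMem]
    filter_upwards [h, volume.ae_ne c] with u hu hne hpos
    exact hne (hu hpos (by simp [Real.exp_pos]))
  simp at h_null

lemma exp_neg_mul_mul_exp_mul (β F v u : ℝ) :
    Real.exp (-β * v) * Real.exp (β * F * u) = Real.exp (-β * (v - F * u)) := by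
  rw [← Real.exp_add]
  ring_nf

lemma integral_mul_exp_gibbsMeasure
    (hV : AEMeasurable (fun u => Real.exp (-β * V u)) (volume.restrict (Ioi 0)))
    (g : ℝ → ℝ) (F : ℝ) :
    ∫ u, g u * Real.exp (β * F * id u) ∂gibbsMeasure β V =
      ∫ u in Ioi 0, g u * Real.exp (-β * (V u - F * u)) := by
  rw [integral_gibbsMeasure hV]
  congr 1 with u
  rw [← exp_neg_mul_mul_exp_mul, id]
  ring

lemma mul_mem_interior_integrableExpSet_gibbsMeasure (hβ : 0 < β)
    (hV : AEMeasurable (fun u => Real.exp (-β * V u)) (volume.restrict (Ioi 0))) {F₀ : ℝ}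
    (hint : ∀ F : ℝ, |F| < F₀ →
      IntegrableOn (fun u => Real.exp (-β * (V u - F * u))) (Ioi 0))
    {F : ℝ} (hF : |F| < F₀) :
    β * F ∈ interior (integrableExpSet id (gibbsMeasure β V)) := by
  refine mem_interior.2 ⟨Ioo (-(β * F₀)) (β * F₀), fun t ht => ?_, isOpen_Ioo, ?_⟩
  · have ht' : |t / β| < F₀ := by
      rw [abs_div, abs_of_pos hβ, div_lt_iff₀ hβ, abs_lt]
      constructor <;> linarith [ht.1, ht.2]
    show Integrable (fun u => Real.exp (t * id u)) (gibbsMeasure β V)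
    rw [integrable_gibbsMeasure_iff hV]
    refine (hint _ ht').congr_fun (fun u _ => ?_) measurableSet_Ioi
    dsimp only
    rw [← exp_neg_mul_mul_exp_mul, mul_div_cancel₀ _ hβ.ne', id]
  · have := abs_lt.1 hF
    constructor <;> nlinarith

lemma deriv_cgf_gibbsMeasure
    (hV : AEMeasurable (fun u => Real.exp (-β * V u)) (volume.restrict (Ioi 0))) {F : ℝ}
    (h : β * F ∈ interior (integrableExpSet id (gibbsMeasure β V))) :
    deriv (cgf id (gibbsMeasure β V)) (β * F) =
      (∫ u in Ioi 0, u * Real.exp (-β * (V u - F * u))) /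
        ∫ u in Ioi 0, Real.exp (-β * (V u - F * u)) := by
  have h1 := integral_mul_exp_gibbsMeasure hV id F
  have h0 := integral_mul_exp_gibbsMeasure hV 1 F
  simp only [Pi.one_apply, one_mul, id] at h0 h1
  rw [deriv_cgf h, mgf]
  simp only [id]
  rw [h0, h1]

lemma iteratedDeriv_two_cgf_gibbsMeasure
    (hV : AEMeasurable (fun u => Real.exp (-β * V u)) (volume.restrict (Ioi 0)))
    (h : 0 ∈ interior (integrableExpSet id (gibbsMeasure β V))) :
    iteratedDeriv 2 (cgf id (gibbsMeasure β V)) 0 =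
      (∫ u in Ioi 0, u ^ 2 * Real.exp (-β * V u)) / (∫ u in Ioi 0, Real.exp (-β * V u)) -
        ((∫ u in Ioi 0, u * Real.exp (-β * V u)) /
          (∫ u in Ioi 0, Real.exp (-β * V u))) ^ 2 := by
  have h2 := integral_mul_exp_gibbsMeasure hV (· ^ 2) 0
  have h1 := integral_mul_exp_gibbsMeasure hV id 0
  have h0 := integral_mul_exp_gibbsMeasure hV 1 0
  simp only [Pi.one_apply, one_mul, id, mul_zero, zero_mul, sub_zero, Real.exp_zero, mul_one]
    at h0 h1 h2
  rw [iteratedDeriv_two_cgf h, deriv_cgf h, mgf]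
  simp only [id, zero_mul, Real.exp_zero, mul_one]
  rw [h0, h1, h2]

end Gibbs

theorem hookes_law_general
    (β : ℝ) (hβ : 0 < β)
    (V : ℝ → ℝ)
    (F₀ : ℝ) (hF₀ : 0 < F₀)
    (hint : ∀ F : ℝ, |F| < F₀ →
      IntegrableOn (fun u => Real.exp (-β * (V u - F * u))) (Ioi 0) ∧
      IntegrableOn (fun u => u * Real.exp (-β * (V u - F * u))) (Ioi 0) ∧
      IntegrableOn (fun u => u ^ 2 * Real.exp (-β * (V u - F * u))) (Ioi 0)) :
    (fun F : ℝ =>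
        (∫ u in Ioi (0:ℝ), u * Real.exp (-β * (V u - F * u))) /
            (∫ u in Ioi (0:ℝ), Real.exp (-β * (V u - F * u))) -
          (∫ u in Ioi (0:ℝ), u * Real.exp (-β * (V u - 0 * u))) /
            (∫ u in Ioi (0:ℝ), Real.exp (-β * (V u - 0 * u))) -
          (β * ((∫ u in Ioi (0:ℝ), u ^ 2 * Real.exp (-β * V u)) /
                (∫ u in Ioi (0:ℝ), Real.exp (-β * V u)) -
              ((∫ u in Ioi (0:ℝ), u * Real.exp (-β * V u)) /
                  (∫ u in Ioi (0:ℝ), Real.exp (-β * V u))) ^ 2)) * F)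
      =o[𝓝 0] (fun F : ℝ => F) ∧
    0 < β * ((∫ u in Ioi (0:ℝ), u ^ 2 * Real.exp (-β * V u)) /
          (∫ u in Ioi (0:ℝ), Real.exp (-β * V u)) -
        ((∫ u in Ioi (0:ℝ), u * Real.exp (-β * V u)) /
            (∫ u in Ioi (0:ℝ), Real.exp (-β * V u))) ^ 2) := by
  have hF₀' : |(0:ℝ)| < F₀ := by simpa using hF₀
  have hV : AEMeasurable (fun u => Real.exp (-β * V u)) (volume.restrict (Ioi 0)) := by
    simpa using (hint 0 hF₀').1.aestronglyMeasurable.aemeasurable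
  have hI {F : ℝ} (hF : |F| < F₀) := mul_mem_interior_integrableExpSet_gibbsMeasure hβ hV
    (fun F hF => (hint F hF).1) hF
  have h0 : (0:ℝ) ∈ interior (integrableExpSet id (gibbsMeasure β V)) := by
    simpa using hI hF₀'
  rw [← iteratedDeriv_two_cgf_gibbsMeasure hV h0]
  refine ⟨?_, mul_pos hβ (iteratedDeriv_two_cgf_pos h0 (not_ae_eq_const_gibbsMeasure hV))⟩
  have hmean : ∀ᶠ F in 𝓝 0, deriv (cgf id (gibbsMeasure β V)) (β * F) =
      (∫ u in Ioi (0:ℝ), u * Real.exp (-β * (V u - F * u))) /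
        (∫ u in Ioi (0:ℝ), Real.exp (-β * (V u - F * u))) :=
    eventually_of_mem ((isOpen_lt continuous_abs continuous_const).mem_nhds hF₀')
      fun F hF => deriv_cgf_gibbsMeasure hV (hI hF)
  have hd := (hasDerivAt_deriv_cgf (hI hF₀')).comp (0:ℝ) ((hasDerivAt_id (0:ℝ)).const_mul β)
  rw [hasDerivAt_iff_isLittleO] at hd
  simp only [Function.comp_apply, mul_one, sub_zero, smul_eq_mul] at hd
  refine hd.congr' ?_ EventuallyEq.rfl
  filter_upwards [hmean] with F hF
  rw [hF, hmean.self_of_nhds, mul_zero]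
  ring

/-- **Hooke's law for the one-dimensional chain.**
The elastic expansion satisfies `m(T,F) - m(T,0) = R·F + o(F)` as `F → 0`, where
`R = β·(⟨u²⟩ - ⟨u⟩²) > 0` is `β` times the Gibbs variance of the spacing at `F = 0`. -/
theorem hookes_law
    (β : ℝ) (hβ : 0 < β)
    (V : ℝ → ℝ)
    (hcont : ContinuousOn V (Ioi 0))
    (hV0 : Tendsto V (𝓝[>] 0) atTop)
    (F₀ : ℝ) (hF₀ : 0 < F₀)
    (hint : ∀ F : ℝ, |F| < F₀ →
      IntegrableOn (fun u => Real.exp (-β * (V u - F * u))) (Ioi 0) ∧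
      IntegrableOn (fun u => u * Real.exp (-β * (V u - F * u))) (Ioi 0) ∧
      IntegrableOn (fun u => u ^ 2 * Real.exp (-β * (V u - F * u))) (Ioi 0)) :
    (fun F : ℝ =>
        (∫ u in Ioi (0:ℝ), u * Real.exp (-β * (V u - F * u))) /
            (∫ u in Ioi (0:ℝ), Real.exp (-β * (V u - F * u))) -
          (∫ u in Ioi (0:ℝ), u * Real.exp (-β * (V u - 0 * u))) /
            (∫ u in Ioi (0:ℝ), Real.exp (-β * (V u - 0 * u))) -
          (β * ((∫ u in Ioi (0:ℝ), u ^ 2 * Real.exp (-β * V u)) /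
                (∫ u in Ioi (0:ℝ), Real.exp (-β * V u)) -
              ((∫ u in Ioi (0:ℝ), u * Real.exp (-β * V u)) /
                  (∫ u in Ioi (0:ℝ), Real.exp (-β * V u))) ^ 2)) * F)
      =o[𝓝 0] (fun F : ℝ => F) ∧
    0 < β * ((∫ u in Ioi (0:ℝ), u ^ 2 * Real.exp (-β * V u)) /
          (∫ u in Ioi (0:ℝ), Real.exp (-β * V u)) -
        ((∫ u in Ioi (0:ℝ), u * Real.exp (-β * V u)) /
            (∫ u in Ioi (0:ℝ), Real.exp (-β * V u))) ^ 2) :=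
  hookes_law_general β hβ V F₀ hF₀ hint
end
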